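/- arXiv:math/0504518 — 3 statements merged into one kernel-verified Lean document; each statement's English description precedes it below -/
import Mathlib

section
/- Every finite tree T with at least two vertices and maximum degree δ ≥ 2 can be split into two subtrees T₁, T₂ by removing a single edge, such that the ratio m = max(|V(T₁)|,|V(T₂)|)/min(|V(T₁)|,|V(T₂)|) of their vertex-set cardinalities satisfies 1 ≤ m ≤ 4(δ−1) − 1. -/
open SimpleGraph Set

namespace TreeSplitAux

variable {V : Type} [Fintype V] [DecidableEq V] {G : SimpleGraph V}

/-- The vertex set of the component of `u` after deleting edge `s(u,v)`. -/
def comp (G : SimpleGraph V) (u v : V) : Set V :=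
  {w | (G.deleteEdges {s(u, v)}).Reachable u w}

lemma deleteEdges_swap (G : SimpleGraph V) (u v : V) :
    G.deleteEdges {s(v, u)} = G.deleteEdges {s(u, v)} := by
  rw [Sym2.eq_swap]

lemma mem_comp_swap {u v w : V} :
    w ∈ comp G v u ↔ (G.deleteEdges {s(u, v)}).Reachable v w := by
  unfold comp
  rw [deleteEdges_swap]
  rfl

lemma self_mem_comp (u v : V) : u ∈ comp G u v := Reachable.refl u

lemma not_mem_comp (hT : G.IsTree) {u v : V} (h : G.Adj u v) : v ∉ comp G u v := by
  have hb : G.IsBridge s(u, v) := isAcyclic_iff_forall_adj_isBridge.mp hT.IsAcyclic h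
  exact isBridge_iff.mp hb

lemma mem_comp_or (hT : G.IsTree) (u v w : V) :
    w ∈ comp G u v ∨ w ∈ comp G v u := by
  set H := G.deleteEdges {s(u, v)} with hH
  have key : ∀ {x y : V} (_ : G.Walk x y),
      (H.Reachable u x ∨ H.Reachable v x) → (H.Reachable u y ∨ H.Reachable v y) := by
    intro x y p
    induction p with
    | nil => exact id
    | @cons x z y ha q ih =>
      intro hx
      by_cases he : s(x, z) = s(u, v)
      · rw [Sym2.eq_iff] at he
        rcases he with ⟨rfl, rfl⟩ | ⟨rfl, rfl⟩
        · exact ih (Or.inr (Reachable.refl _))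
        · exact ih (Or.inl (Reachable.refl _))
      · have hadj : H.Adj x z := by
          rw [hH, deleteEdges_adj]
          exact ⟨ha, by simpa using he⟩
        exact ih (hx.imp (fun hr => hr.trans hadj.reachable)
          (fun hr => hr.trans hadj.reachable))
  obtain ⟨p⟩ := hT.isConnected.preconnected u w
  refine (key p (Or.inl (Reachable.refl u))).imp (fun h => h) (fun h => ?_)
  rw [mem_comp_swap]
  exact h

lemma comp_disjoint (hT : G.IsTree) {u v : V} (h : G.Adj u v) :
    Disjoint (comp G u v) (comp G v u) := by
  rw [Set.disjoint_left]
  intro w hw hw'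
  rw [mem_comp_swap] at hw'
  exact not_mem_comp hT h (hw.trans hw'.symm)

lemma comp_card_add (hT : G.IsTree) {u v : V} (h : G.Adj u v) :
    (comp G u v).ncard + (comp G v u).ncard = Fintype.card V := by
  rw [← Set.ncard_union_eq (comp_disjoint hT h) (toFinite _) (toFinite _)]
  rw [Set.eq_univ_of_forall (fun w => Set.mem_union w _ _ |>.mpr (mem_comp_or hT u v w))]
  rw [Set.ncard_univ, Nat.card_eq_fintype_card]

lemma insert_subset_comp (hT : G.IsTree) {u v y : V} (huv : G.Adj u v) (hvy : G.Adj v y)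
    (hyu : y ≠ u) : insert v (comp G u v) ⊆ comp G v y := by
  intro w hw
  rcases Set.mem_insert_iff.mp hw with rfl | hw
  · exact Reachable.refl w
  · obtain ⟨p⟩ := hw
    have hvsup : v ∉ p.support := by
      intro hv
      exact not_mem_comp hT huv ⟨p.takeUntil v hv⟩
    have hedges : ∀ e ∈ p.edges, e ∈ (G.deleteEdges {s(v, y)}).edgeSet := by
      intro e he
      have h1 := p.edges_subset_edgeSet he
      rw [edgeSet_deleteEdges] at h1 ⊢
      refine ⟨h1.1, ?_⟩
      simp only [Set.mem_singleton_iff]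
      rintro rfl
      exact hvsup (p.fst_mem_support_of_mem_edges he)
    have hr : (G.deleteEdges {s(v, y)}).Reachable u w := ⟨p.transfer _ hedges⟩
    have hadj : (G.deleteEdges {s(v, y)}).Adj v u := by
      rw [deleteEdges_adj]
      refine ⟨huv.symm, ?_⟩
      simp only [Set.mem_singleton_iff, Sym2.eq_iff]
      push_neg
      constructor
      · intro _ h; exact hyu h.symm
      · intro h; exact absurd h hvy.ne
    exact hadj.reachable.trans hr

lemma exists_child (hT : G.IsTree) {u v w : V} (huv : G.Adj u v)
    (hw : w ∈ comp G v u) (hwv : w ≠ v) :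
    ∃ y, G.Adj v y ∧ y ≠ u ∧ w ∈ comp G y v := by
  rw [mem_comp_swap] at hw
  obtain ⟨p0⟩ := hw
  obtain ⟨p, hp⟩ : ∃ p : (G.deleteEdges {s(u, v)}).Walk v w, p.IsPath :=
    ⟨p0.bypass, p0.bypass_isPath⟩
  have hnn : ¬ p.Nil := Walk.not_nil_of_ne (fun h => hwv h.symm)
  obtain ⟨y, ha, q, rfl⟩ := Walk.not_nil_iff.mp hnn
  rw [Walk.cons_isPath_iff] at hp
  have hGvy := deleteEdges_adj.mp ha
  have hyu : y ≠ u := by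
    rintro rfl
    exact hGvy.2 (by simp [Sym2.eq_swap])
  have hedges : ∀ e ∈ q.edges, e ∈ (G.deleteEdges {s(y, v)}).edgeSet := by
    intro e he
    have h1 := q.edges_subset_edgeSet he
    rw [edgeSet_deleteEdges] at h1 ⊢
    refine ⟨h1.1, ?_⟩
    simp only [Set.mem_singleton_iff]
    rintro rfl
    exact hp.2 (q.snd_mem_support_of_mem_edges he)
  exact ⟨y, hGvy.1, hyu, ⟨q.transfer _ hedges⟩⟩

lemma ncard_biUnion_le {α : Type*} [DecidableEq α] (t : Finset α) (f : α → Set V) :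
    (⋃ y ∈ t, f y).ncard ≤ ∑ y ∈ t, (f y).ncard := by
  induction t using Finset.induction with
  | empty => simp
  | @insert a s ha ih =>
    rw [Finset.set_biUnion_insert, Finset.sum_insert ha]
    exact (Set.ncard_union_le _ _).trans (by omega)

lemma key_bound (hT : G.IsTree) [DecidableRel G.Adj] {u v : V} (huv : G.Adj u v)
    (hmax : ∀ x y : V, G.Adj x y →
      min (comp G x y).ncard (comp G y x).ncard ≤
        min (comp G u v).ncard (comp G v u).ncard)
    (hab : (comp G u v).ncard ≤ (comp G v u).ncard) :
    (comp G v u).ncard ≤ (G.maxDegree - 1) * (comp G u v).ncard + 1 := by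
  set a := (comp G u v).ncard with hadef
  set b := (comp G v u).ncard with hbdef
  set t : Finset V := (G.neighborFinset v).erase u with ht
  have hchild : ∀ y ∈ t, (comp G y v).ncard ≤ a := by
    intro y hy
    rw [ht, Finset.mem_erase, mem_neighborFinset] at hy
    obtain ⟨hyu, hvy⟩ := hy
    have h1 : a + 1 ≤ (comp G v y).ncard := by
      have hle := Set.ncard_le_ncard (insert_subset_comp hT huv hvy hyu) (toFinite _)
      rwa [Set.ncard_insert_of_notMem (not_mem_comp hT huv) (toFinite _)] at hle
    have hm := hmax y v hvy.symm
    rw [min_eq_left hab] at hm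
    rcases le_total (comp G y v).ncard (comp G v y).ncard with h | h
    · rwa [min_eq_left h] at hm
    · rw [min_eq_right h] at hm; omega
  have hcover : comp G v u ⊆ insert v (⋃ y ∈ t, comp G y v) := by
    intro w hw
    by_cases hwv : w = v
    · exact hwv ▸ Set.mem_insert _ _
    · obtain ⟨y, h1, h2, h3⟩ := exists_child hT huv hw hwv
      refine Set.mem_insert_of_mem _ ?_
      simp only [Set.mem_iUnion]
      refine ⟨y, ?_, h3⟩
      rw [ht, Finset.mem_erase, mem_neighborFinset]
      exact ⟨h2, h1⟩
  have hb1 : b ≤ (⋃ y ∈ t, comp G y v).ncard + 1 :=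
    (Set.ncard_le_ncard hcover (toFinite _)).trans (Set.ncard_insert_le _ _)
  have hb2 : (⋃ y ∈ t, comp G y v).ncard ≤ ∑ y ∈ t, (comp G y v).ncard :=
    ncard_biUnion_le t _
  have hb3 : ∑ y ∈ t, (comp G y v).ncard ≤ t.card * a := by
    have := Finset.sum_le_card_nsmul t _ a hchild
    simpa [smul_eq_mul] using this
  have htc : t.card ≤ G.maxDegree - 1 := by
    rw [ht, Finset.card_erase_of_mem (by rw [mem_neighborFinset]; exact huv.symm)]
    have h2 := G.degree_le_maxDegree v
    have h3 : G.degree v = (G.neighborFinset v).card := rfl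
    omega
  have := Nat.mul_le_mul_right a htc
  omega

lemma final_arith (δ a b : ℕ) (hδ : 2 ≤ δ) (ha : 1 ≤ a) (hab : a ≤ b)
    (hb : b ≤ (δ - 1) * a + 1) :
    1 ≤ ((max a b : ℕ) : ℝ) / ((min a b : ℕ) : ℝ) ∧
      ((max a b : ℕ) : ℝ) / ((min a b : ℕ) : ℝ) ≤ 4 * ((δ : ℝ) - 1) - 1 := by
  rw [max_eq_right hab, min_eq_left hab]
  have haR : (1 : ℝ) ≤ (a : ℝ) := by exact_mod_cast ha
  have habR : (a : ℝ) ≤ (b : ℝ) := by exact_mod_cast hab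
  have hδR : (2 : ℝ) ≤ (δ : ℝ) := by exact_mod_cast hδ
  have h1 : ((δ - 1 : ℕ) : ℝ) = (δ : ℝ) - 1 := by
    rw [Nat.cast_sub (by omega)]; norm_num
  have hbR : (b : ℝ) ≤ ((δ : ℝ) - 1) * (a : ℝ) + 1 := by
    rw [← h1]
    exact_mod_cast hb
  have hapos : (0 : ℝ) < (a : ℝ) := by linarith
  constructor
  · rw [le_div_iff₀ hapos]
    linarith
  · rw [div_le_iff₀ hapos]
    nlinarith [mul_le_mul_of_nonneg_right hδR (le_of_lt hapos)]

end TreeSplitAux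

open TreeSplitAux in
/-- **Tree-splitting lemma.** Every finite tree with at least two vertices and
maximum degree `δ ≥ 2` can be split into two subtrees by removing an edge so that
the ratio `m = max/min` of the orders of the two components satisfies
`1 ≤ m ≤ 4(δ-1) - 1`. -/
theorem tree_split_ratio {V : Type} [Fintype V] [DecidableEq V]
    (G : SimpleGraph V) [DecidableRel G.Adj]
    (hT : G.IsTree) (hV : 2 ≤ Fintype.card V) (hδ : 2 ≤ G.maxDegree) :
    ∃ u v : V, G.Adj u v ∧
      (let a : ℕ := {w | (G.deleteEdges {s(u, v)}).Reachable u w}.ncard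
       let b : ℕ := {w | (G.deleteEdges {s(u, v)}).Reachable v w}.ncard
       1 ≤ ((max a b : ℕ) : ℝ) / ((min a b : ℕ) : ℝ) ∧
       ((max a b : ℕ) : ℝ) / ((min a b : ℕ) : ℝ) ≤ 4 * ((G.maxDegree : ℝ) - 1) - 1) := by
  classical
  -- there exists an edge
  have hadj_ex : ∃ x y : V, G.Adj x y := by
    by_contra h
    push_neg at h
    have hd : ∀ v : V, G.degree v ≤ 0 := by
      intro v
      have : G.neighborFinset v = ∅ :=
        Finset.eq_empty_of_forall_notMem fun y hy => h v y ((mem_neighborFinset _ _ _).mp hy)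
      have h3 : G.degree v = (G.neighborFinset v).card := rfl
      rw [h3, this]
      simp
    have := G.maxDegree_le_of_forall_degree_le 0 hd
    omega
  obtain ⟨x, y, hxy⟩ := hadj_ex
  -- pick an adjacent pair maximizing the min of the two component sizes
  obtain ⟨p, hp, hpmax⟩ := Finset.exists_max_image
    (Finset.univ.filter fun p : V × V => G.Adj p.1 p.2)
    (fun p => min (comp G p.1 p.2).ncard (comp G p.2 p.1).ncard)
    ⟨(x, y), by simp [hxy]⟩
  rw [Finset.mem_filter] at hp
  have hadj : G.Adj p.1 p.2 := hp.2
  have hmax : ∀ x y : V, G.Adj x y →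
      min (comp G x y).ncard (comp G y x).ncard ≤
        min (comp G p.1 p.2).ncard (comp G p.2 p.1).ncard := by
    intro x y hxy'
    exact hpmax (x, y) (by simp [hxy'])
  -- helper to conclude from an ordered pair with a ≤ b
  have main : ∀ u v : V, G.Adj u v →
      (∀ x y : V, G.Adj x y → min (comp G x y).ncard (comp G y x).ncard ≤
        min (comp G u v).ncard (comp G v u).ncard) →
      (comp G u v).ncard ≤ (comp G v u).ncard →
      ∃ u' v' : V, G.Adj u' v' ∧
      (let a : ℕ := {w | (G.deleteEdges {s(u', v')}).Reachable u' w}.ncard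
       let b : ℕ := {w | (G.deleteEdges {s(u', v')}).Reachable v' w}.ncard
       1 ≤ ((max a b : ℕ) : ℝ) / ((min a b : ℕ) : ℝ) ∧
       ((max a b : ℕ) : ℝ) / ((min a b : ℕ) : ℝ) ≤ 4 * ((G.maxDegree : ℝ) - 1) - 1) := by
    intro u v huv hm hab
    refine ⟨u, v, huv, ?_⟩
    have hset1 : {w | (G.deleteEdges {s(u, v)}).Reachable u w} = comp G u v := rfl
    have hset2 : {w | (G.deleteEdges {s(u, v)}).Reachable v w} = comp G v u := by
      unfold comp
      rw [deleteEdges_swap]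
    rw [hset1, hset2]
    have ha : 1 ≤ (comp G u v).ncard := by
      rw [Nat.one_le_iff_ne_zero, ← Nat.pos_iff_ne_zero, Set.ncard_pos (toFinite _)]
      exact ⟨u, self_mem_comp u v⟩
    exact final_arith G.maxDegree _ _ hδ ha hab (key_bound hT huv hm hab)
  rcases le_total (comp G p.1 p.2).ncard (comp G p.2 p.1).ncard with h | h
  · exact main p.1 p.2 hadj hmax h
  · refine main p.2 p.1 hadj.symm ?_ h
    intro x y hxy'
    rw [min_comm ((comp G p.2 p.1).ncard)]
    exact hmax x y hxy'
end

section
/- Let H be a finite connected simple graph with N vertices and let P be the transition matrix of the simple random walk on H, with δ the maximum degree. Let A = I − (1/δ)(D − 𝒜) be the RRW transition matrix. Then the averaged continuous-time return probabilities satisfy (1/N)Tr e^{−t(I−P)} ≤ (1/N)Tr e^{−t(I−A)} ≤ (1/N)Tr e^{−(t/δ)(I−P)} for all t ≥ 0. -/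
open Real

open Matrix
open scoped Nat

section AuxRRW

variable {V : Type} [Fintype V] [DecidableEq V]




/-- A product-shift identity in a monoid. -/
lemma aux_mul_pow_succ {M : Type*} [Monoid M] (a b : M) (n : ℕ) :
    (a * b) ^ (n + 1) = a * (b * a) ^ n * b := by
  induction n with
  | zero => simp
  | succ n ih => rw [pow_succ, ih, pow_succ]; simp [mul_assoc]

lemma aux_trace_pow_mul_comm (A B : Matrix V V ℝ) (n : ℕ) :
    ((A * B) ^ n).trace = ((B * A) ^ n).trace := by
  cases n with
  | zero => simp
  | succ n =>
    rw [aux_mul_pow_succ, mul_assoc, Matrix.trace_mul_comm, mul_assoc, ← pow_succ]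

lemma aux_trace_exp_mul_comm (A B : Matrix V V ℝ) :
    (NormedSpace.exp (A * B)).trace = (NormedSpace.exp (B * A)).trace := by
  letI : SeminormedRing (Matrix V V ℝ) := Matrix.linftyOpSemiNormedRing
  letI : NormedRing (Matrix V V ℝ) := Matrix.linftyOpNormedRing
  letI : NormedAlgebra ℝ (Matrix V V ℝ) := Matrix.linftyOpNormedAlgebra
  haveI : CompleteSpace (Matrix V V ℝ) := FiniteDimensional.complete ℝ _
  have tr_exp : ∀ M : Matrix V V ℝ,
      (NormedSpace.exp M).trace = ∑' n : ℕ, ((n ! : ℝ))⁻¹ • (M ^ n).trace := by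
    intro M
    rw [NormedSpace.exp_eq_tsum ℝ]
    set T : Matrix V V ℝ →L[ℝ] ℝ :=
      LinearMap.toContinuousLinearMap (Matrix.traceLinearMap V ℝ ℝ) with hT
    have hsum : Summable (fun n : ℕ => ((n ! : ℝ))⁻¹ • M ^ n) :=
      NormedSpace.expSeries_summable' (𝕂 := ℝ) M
    have := T.map_tsum hsum
    have hTa : ∀ X : Matrix V V ℝ, T X = X.trace := fun X => rfl
    calc (∑' n : ℕ, ((n ! : ℝ))⁻¹ • M ^ n).trace
        = T (∑' n : ℕ, ((n ! : ℝ))⁻¹ • M ^ n) := rfl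
      _ = ∑' n : ℕ, T (((n ! : ℝ))⁻¹ • M ^ n) := this
      _ = ∑' n : ℕ, ((n ! : ℝ))⁻¹ • (M ^ n).trace := by
          refine tsum_congr fun n => ?_
          rw [_root_.map_smul, hTa]
  rw [tr_exp, tr_exp]
  exact tsum_congr fun n => by rw [aux_trace_pow_mul_comm]



lemma aux_trace_exp_unitary_diag (U : Matrix.unitaryGroup V ℝ) (μ : V → ℝ) :
    (NormedSpace.exp ((U : Matrix V V ℝ) * Matrix.diagonal μ * star (U : Matrix V V ℝ))).trace
      = ∑ v, Real.exp (μ v) := by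
  have h1 : star (U : Matrix V V ℝ) * (U : Matrix V V ℝ) = 1 :=
    Matrix.mem_unitaryGroup_iff'.mp U.2
  have h2 : (U : Matrix V V ℝ) * star (U : Matrix V V ℝ) = 1 :=
    Matrix.mem_unitaryGroup_iff.mp U.2
  set u : (Matrix V V ℝ)ˣ := ⟨(U : Matrix V V ℝ), star (U : Matrix V V ℝ), h2, h1⟩ with hu
  have hcoe : (↑u⁻¹ : Matrix V V ℝ) = star (U : Matrix V V ℝ) := rfl
  have hcoe' : (↑u : Matrix V V ℝ) = (U : Matrix V V ℝ) := rfl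
  rw [← hcoe, ← hcoe', Matrix.exp_units_conj u]
  rw [Matrix.trace_mul_comm, ← mul_assoc, hcoe, hcoe', h1, one_mul]
  rw [Matrix.exp_diagonal, Matrix.trace_diagonal]
  refine Finset.sum_congr rfl fun v _ => ?_
  rw [Real.exp_eq_exp_ℝ, Pi.coe_exp]

lemma aux_diag_ofReal {X : Matrix V V ℝ} (hX : X.IsHermitian) :
    Matrix.diagonal (RCLike.ofReal ∘ hX.eigenvalues) = Matrix.diagonal hX.eigenvalues := by
  congr 1

lemma aux_trace_exp_smul_add_smul_one {X : Matrix V V ℝ} (hX : X.IsHermitian) (c a : ℝ) :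
    (NormedSpace.exp (c • X + a • (1 : Matrix V V ℝ))).trace
      = ∑ v, Real.exp (c * hX.eigenvalues v + a) := by
  have hs : X = (hX.eigenvectorUnitary : Matrix V V ℝ) * Matrix.diagonal hX.eigenvalues
      * star (hX.eigenvectorUnitary : Matrix V V ℝ) := by
    conv_lhs => rw [hX.spectral_theorem]
    rw [aux_diag_ofReal, Unitary.conjStarAlgAut_apply]
  have h2 : (hX.eigenvectorUnitary : Matrix V V ℝ) * star (hX.eigenvectorUnitary : Matrix V V ℝ)
      = 1 := Matrix.mem_unitaryGroup_iff.mp hX.eigenvectorUnitary.2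
  have hdiag : Matrix.diagonal (fun v => c * hX.eigenvalues v + a)
      = c • Matrix.diagonal hX.eigenvalues + a • (1 : Matrix V V ℝ) := by
    rw [← Matrix.diagonal_one, ← Matrix.diagonal_smul, ← Matrix.diagonal_smul,
      Matrix.diagonal_add]
    funext v
    simp
  have key : c • X + a • (1 : Matrix V V ℝ)
      = (hX.eigenvectorUnitary : Matrix V V ℝ)
        * Matrix.diagonal (fun v => c * hX.eigenvalues v + a)
        * star (hX.eigenvectorUnitary : Matrix V V ℝ) := by
    rw [hdiag, Matrix.mul_add, Matrix.add_mul]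
    simp only [Matrix.mul_smul, Matrix.smul_mul, Matrix.mul_one]
    rw [h2, ← hs]
  rw [key, aux_trace_exp_unitary_diag]

lemma aux_trace_exp_smul {X : Matrix V V ℝ} (hX : X.IsHermitian) (c : ℝ) :
    (NormedSpace.exp (c • X)).trace = ∑ v, Real.exp (c * hX.eigenvalues v) := by
  have := aux_trace_exp_smul_add_smul_one hX c 0
  simpa using this

lemma aux_eigenvalues_zero {X : Matrix V V ℝ} (hX : X.IsHermitian) (h : X = 0) (v : V) :
    hX.eigenvalues v = 0 := by
  subst h
  have h1 := hX.mulVec_eigenvectorBasis v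
  rw [Matrix.zero_mulVec] at h1
  rcases smul_eq_zero.mp h1.symm with h | h
  · exact h
  · exfalso
    have hb : hX.eigenvectorBasis v = 0 := by
      ext i
      exact congrFun h i
    have := hX.eigenvectorBasis.orthonormal.1 v
    rw [hb] at this
    simp at this



lemma aux_diag_ofReal' {X : Matrix V V ℝ} (hX : X.IsHermitian) :
    Matrix.diagonal (RCLike.ofReal ∘ hX.eigenvalues) = Matrix.diagonal hX.eigenvalues := rfl

lemma aux_psd_diag_nonneg {M : Matrix V V ℝ} (hM : M.PosSemidef) (i : V) : 0 ≤ M i i := by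
  have := hM.dotProduct_mulVec_nonneg (Pi.single i 1)
  simpa [Matrix.mulVec_single, dotProduct, Pi.single_apply, Finset.sum_ite_eq] using this

lemma aux_core {A B : Matrix V V ℝ} (hA : A.IsHermitian) (hB : B.IsHermitian)
    (hBA : (B - A).PosSemidef) {f : ℝ → ℝ}
    (hconv : ConvexOn ℝ Set.univ f) (hanti : Antitone f) :
    ∑ v, f (hB.eigenvalues v) ≤ ∑ v, f (hA.eigenvalues v) := by
  classical
  set ν : V → ℝ := hA.eigenvalues with hν
  set Ua : Matrix V V ℝ := (hA.eigenvectorUnitary : Matrix V V ℝ) with hUa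
  set Uw : Matrix V V ℝ := (hB.eigenvectorUnitary : Matrix V V ℝ) with hUw
  have hUa1 : Ua * star Ua = 1 := Matrix.mem_unitaryGroup_iff.mp hA.eigenvectorUnitary.2
  have hUa2 : star Ua * Ua = 1 := Matrix.mem_unitaryGroup_iff'.mp hA.eigenvectorUnitary.2
  have hUw1 : Uw * star Uw = 1 := Matrix.mem_unitaryGroup_iff.mp hB.eigenvectorUnitary.2
  have hUw2 : star Uw * Uw = 1 := Matrix.mem_unitaryGroup_iff'.mp hB.eigenvectorUnitary.2
  set C : Matrix V V ℝ := star Ua * Uw with hCdef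
  have hstarC : star C = star Uw * Ua := by rw [hCdef, Matrix.star_mul, star_star]
  have hC1 : star C * C = 1 := by
    rw [hstarC, hCdef, mul_assoc, ← mul_assoc Ua, hUa1, one_mul, hUw2]
  have hC2 : C * star C = 1 := by
    rw [hstarC, hCdef, mul_assoc, ← mul_assoc Uw, hUw1, one_mul, hUa2]
  have hsA : A = Ua * Matrix.diagonal ν * star Ua := by
    conv_lhs => rw [hA.spectral_theorem]
    rw [aux_diag_ofReal', Unitary.conjStarAlgAut_apply]
  have hD : star Uw * A * Uw = star C * Matrix.diagonal ν * C := by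
    rw [hsA, hstarC, hCdef]
    simp only [Matrix.mul_assoc]
  have hdB : star Uw * B * Uw = Matrix.diagonal hB.eigenvalues := by
    have := hB.conjStarAlgAut_star_eigenvectorUnitary
    rw [Unitary.conjStarAlgAut_star_apply, aux_diag_ofReal'] at this
    exact this
  have hDii : ∀ i, (star Uw * A * Uw) i i = ∑ j, (C j i * C j i) * ν j := by
    intro i
    rw [hD, Matrix.mul_apply]
    refine Finset.sum_congr rfl fun j _ => ?_
    rw [Matrix.mul_diagonal]
    have hsc : (star C) i j = C j i := by
      simp [Matrix.star_apply]
    rw [hsc]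
    ring
  have hrow : ∀ i, ∑ j, C j i * C j i = 1 := by
    intro i
    have h := congrArg (fun M : Matrix V V ℝ => M i i) hC1
    simp only [Matrix.mul_apply, Matrix.one_apply_eq] at h
    rw [← h]
    refine Finset.sum_congr rfl fun j _ => ?_
    simp [Matrix.star_apply]
  have hcol : ∀ j, ∑ i, C j i * C j i = 1 := by
    intro j
    have h := congrArg (fun M : Matrix V V ℝ => M j j) hC2
    simp only [Matrix.mul_apply, Matrix.one_apply_eq] at h
    rw [← h]
    refine Finset.sum_congr rfl fun i _ => ?_
    simp [Matrix.star_apply]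
  have hle : ∀ i, (star Uw * A * Uw) i i ≤ hB.eigenvalues i := by
    intro i
    have hpsd := hBA.conjTranspose_mul_mul_same Uw
    have h0 : 0 ≤ (Uwᴴ * (B - A) * Uw) i i := aux_psd_diag_nonneg hpsd i
    have hexp : Uwᴴ * (B - A) * Uw = star Uw * B * Uw - star Uw * A * Uw := by
      rw [Matrix.star_eq_conjTranspose, Matrix.mul_sub, Matrix.sub_mul]
    rw [hexp] at h0
    calc (star Uw * A * Uw) i i ≤ (star Uw * B * Uw) i i := by
          have h0' : 0 ≤ (star Uw * B * Uw - star Uw * A * Uw) i i := h0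
          simp only [Matrix.sub_apply] at h0'
          linarith
      _ = hB.eigenvalues i := by rw [hdB, Matrix.diagonal_apply_eq]
  calc ∑ i, f (hB.eigenvalues i)
      ≤ ∑ i, f ((star Uw * A * Uw) i i) := Finset.sum_le_sum fun i _ => hanti (hle i)
    _ = ∑ i, f (∑ j, (C j i * C j i) • ν j) := by
        refine Finset.sum_congr rfl fun i _ => ?_
        rw [hDii i]
        simp [smul_eq_mul]
    _ ≤ ∑ i, ∑ j, (C j i * C j i) * f (ν j) :=
        Finset.sum_le_sum fun i _ => hconv.map_sum_le
          (fun j _ => mul_self_nonneg _) (hrow i) (fun j _ => Set.mem_univ _)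
    _ = ∑ j, (∑ i, C j i * C j i) * f (ν j) := by
        rw [Finset.sum_comm]
        exact Finset.sum_congr rfl fun j _ => (Finset.sum_mul _ _ _).symm
    _ = ∑ j, f (ν j) := by simp [hcol]

lemma aux_convexOn_exp_neg (t : ℝ) : ConvexOn ℝ Set.univ (fun x : ℝ => Real.exp (-t * x)) := by
  have h := convexOn_exp.comp_affineMap ((LinearMap.lsmul ℝ ℝ (-t)).toAffineMap)
  simpa [Function.comp_def, smul_eq_mul] using h

lemma aux_antitone_exp_neg {t : ℝ} (ht : 0 ≤ t) :
    Antitone (fun x : ℝ => Real.exp (-t * x)) := by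
  intro a b hab
  apply Real.exp_le_exp.2
  nlinarith

lemma aux_main {N : Matrix V V ℝ} (hN : N.PosSemidef) {s : V → ℝ}
    (hs0 : ∀ v, 0 ≤ s v) (hs1 : ∀ v, s v ≤ 1) {t : ℝ} (ht : 0 ≤ t) :
    (NormedSpace.exp ((-t) • N)).trace
      ≤ (NormedSpace.exp ((-t) • (Matrix.diagonal s * N * Matrix.diagonal s))).trace := by
  classical
  set R : Matrix V V ℝ := (open scoped MatrixOrder in CFC.sqrt N) with hRdef
  have hR : R * R = N := (open scoped MatrixOrder in CFC.sqrt_mul_sqrt_self N hN.nonneg)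
  have hRH : R.IsHermitian :=
    (open scoped MatrixOrder in (Matrix.nonneg_iff_posSemidef.mp (CFC.sqrt_nonneg N)).1)
  set P : Matrix V V ℝ := R * Matrix.diagonal (fun v => s v * s v) * R with hPdef
  have hdiagH : ∀ g : V → ℝ, (Matrix.diagonal g)ᴴ = Matrix.diagonal g := by
    intro g
    rw [Matrix.diagonal_conjTranspose]
    congr 1
  have hPH : P.IsHermitian := by
    rw [Matrix.IsHermitian, hPdef, Matrix.conjTranspose_mul, Matrix.conjTranspose_mul,
      hdiagH, hRH.eq, Matrix.mul_assoc]
  have hsq : ∀ v, 0 ≤ 1 - s v * s v := by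
    intro v
    nlinarith [hs0 v, hs1 v]
  have hsub : (N - P).PosSemidef := by
    have key : N - P
        = (Matrix.diagonal (fun v => Real.sqrt (1 - s v * s v)) * R)ᴴ
          * (Matrix.diagonal (fun v => Real.sqrt (1 - s v * s v)) * R) := by
      rw [Matrix.conjTranspose_mul, hdiagH, hRH.eq, Matrix.mul_assoc,
        ← Matrix.mul_assoc (Matrix.diagonal _), Matrix.diagonal_mul_diagonal]
      have : (fun v => Real.sqrt (1 - s v * s v) * Real.sqrt (1 - s v * s v))
          = fun v => 1 - s v * s v := by
        funext v
        exact Real.mul_self_sqrt (hsq v)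
      rw [this]
      have hD : Matrix.diagonal (fun v => 1 - s v * s v)
          = 1 - Matrix.diagonal (fun v => s v * s v) := by
        rw [← Matrix.diagonal_one, ← Matrix.diagonal_sub]
      rw [hD, ← Matrix.mul_assoc, Matrix.mul_sub, Matrix.sub_mul, Matrix.mul_one, hR, hPdef]
    rw [key]
    exact Matrix.posSemidef_conjTranspose_mul_self _
  have step1 : ∑ v, Real.exp (-t * hN.1.eigenvalues v)
      ≤ ∑ v, Real.exp (-t * hPH.eigenvalues v) :=
    aux_core hPH hN.1 hsub (aux_convexOn_exp_neg t) (aux_antitone_exp_neg ht)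
  have conv1 : (NormedSpace.exp ((-t) • N)).trace = ∑ v, Real.exp (-t * hN.1.eigenvalues v) :=
    aux_trace_exp_smul hN.1 (-t)
  have conv2 : (NormedSpace.exp ((-t) • P)).trace = ∑ v, Real.exp (-t * hPH.eigenvalues v) :=
    aux_trace_exp_smul hPH (-t)
  have eqtr : (NormedSpace.exp ((-t) • P)).trace
      = (NormedSpace.exp ((-t) • (Matrix.diagonal s * N * Matrix.diagonal s))).trace := by
    have hfac : (-t) • P = ((-t) • (R * Matrix.diagonal s)) * (Matrix.diagonal s * R) := by
      rw [Matrix.smul_mul]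
      congr 1
      rw [hPdef, ← Matrix.diagonal_mul_diagonal]
      simp only [Matrix.mul_assoc]
    rw [hfac, aux_trace_exp_mul_comm]
    congr 2
    rw [Matrix.mul_smul]
    congr 1
    rw [← hR]
    simp only [Matrix.mul_assoc]
  rw [conv1, ← eqtr, conv2]
  exact step1

end AuxRRW

/-- **Comparison of SRW and RRW average continuous-time return probabilities.**
With `ℒ = I - D^{-1/2}𝒜D^{-1/2}` the normalised Laplacian of the SRW (same spectrum
as `I - P`) and `I - A = (1/δ)L` for the RRW, the averaged heat-kernel traces satisfy
`(1/N)Tr e^{-t(I-P)} ≤ (1/N)Tr e^{-t(I-A)} ≤ (1/N)Tr e^{-(t/δ)(I-P)}`. -/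
theorem rrw_srw_return_comparison {V : Type} [Fintype V] [DecidableEq V]
    (G : SimpleGraph V) [DecidableRel G.Adj] (hG : G.Connected)
    (hL : (Matrix.of fun u v : V =>
        if G.Adj u v then (Real.sqrt (G.degree u * G.degree v))⁻¹ else 0 :
        Matrix V V ℝ).IsHermitian)
    (hM : (((G.maxDegree : ℝ))⁻¹ • G.lapMatrix ℝ).IsHermitian)
    (t : ℝ) (ht : 0 ≤ t) :
    (1 / (Fintype.card V : ℝ)) * ∑ v : V, Real.exp (-t * (1 - hL.eigenvalues v)) ≤
      (1 / (Fintype.card V : ℝ)) * ∑ v : V, Real.exp (-t * hM.eigenvalues v) ∧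
    (1 / (Fintype.card V : ℝ)) * ∑ v : V, Real.exp (-t * hM.eigenvalues v) ≤
      (1 / (Fintype.card V : ℝ)) *
        ∑ v : V, Real.exp (-(t / (G.maxDegree : ℝ)) * (1 - hL.eigenvalues v)) := by
  classical
  have hNe : Nonempty V := hG.nonempty
  set W : Matrix V V ℝ := (Matrix.of fun u v : V =>
      if G.Adj u v then (Real.sqrt (G.degree u * G.degree v))⁻¹ else 0 :
      Matrix V V ℝ) with hWdef
  set δ : ℝ := (G.maxDegree : ℝ) with hδdef
  set M : Matrix V V ℝ := δ⁻¹ • G.lapMatrix ℝ with hMdef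
  rcases subsingleton_or_nontrivial V with hsub | hnt
  · -- degenerate single-vertex case
    have hdeg0 : ∀ v : V, G.degree v = 0 := by
      intro v
      by_contra h
      obtain ⟨w, hw⟩ := (G.degree_pos_iff_exists_adj v).mp (Nat.pos_of_ne_zero h)
      exact G.ne_of_adj hw (Subsingleton.elim v w)
    have hmax : G.maxDegree = 0 :=
      Nat.le_zero.mp (G.maxDegree_le_of_forall_degree_le 0 fun v => (hdeg0 v).le)
    have hδ0 : δ = 0 := by rw [hδdef, hmax]; norm_num
    have hW0 : W = 0 := by
      ext u v
      have huv : u = v := Subsingleton.elim u v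
      subst huv
      simp [hWdef]
    have hM0 : M = 0 := by
      have hL0 : G.lapMatrix ℝ = 0 := by
        ext u v
        have huv : u = v := Subsingleton.elim u v
        subst huv
        simp [SimpleGraph.lapMatrix, SimpleGraph.degMatrix, hdeg0]
      rw [hMdef, hL0, smul_zero]
    have e1 : ∀ v, hL.eigenvalues v = 0 := fun v => aux_eigenvalues_zero hL hW0 v
    have e2 : ∀ v, hM.eigenvalues v = 0 := fun v => aux_eigenvalues_zero hM hM0 v
    constructor
    · refine mul_le_mul_of_nonneg_left ?_ (by positivity)
      refine Finset.sum_le_sum fun v _ => ?_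
      rw [e1, e2]
      apply Real.exp_le_exp.2
      nlinarith
    · refine mul_le_mul_of_nonneg_left ?_ (by positivity)
      refine Finset.sum_le_sum fun v _ => ?_
      rw [e1, e2]
      simp [hmax]
  · -- main case
    have hd : ∀ v : V, 0 < G.degree v := by
      intro v
      rw [G.degree_pos_iff_exists_adj]
      obtain ⟨w, hw⟩ := exists_ne v
      obtain ⟨p⟩ := hG.preconnected v w
      cases p with
      | nil => exact absurd rfl (Ne.symm hw)
      | cons h q => exact ⟨_, h⟩
    have hdR : ∀ v : V, (0:ℝ) < (G.degree v : ℝ) := fun v => by exact_mod_cast hd v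
    have hdle : ∀ v : V, (G.degree v : ℝ) ≤ δ := fun v => by
      rw [hδdef]; exact_mod_cast G.degree_le_maxDegree v
    have hδpos : (0:ℝ) < δ := lt_of_lt_of_le (hdR (Classical.arbitrary V)) (hdle _)
    have hδne : δ ≠ 0 := ne_of_gt hδpos
    have hsd : ∀ v : V, Real.sqrt (G.degree v) ≠ 0 :=
      fun v => ne_of_gt (Real.sqrt_pos.mpr (hdR v))
    have hsδ : Real.sqrt δ ≠ 0 := ne_of_gt (Real.sqrt_pos.mpr hδpos)
    set T : Matrix V V ℝ := Matrix.diagonal (fun v => (Real.sqrt (G.degree v))⁻¹) with hTdef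
    set ℒ : Matrix V V ℝ := (1 : Matrix V V ℝ) - W with hℒdef
    have hLap : ∀ u v : V, G.lapMatrix ℝ u v =
        (if u = v then (G.degree u : ℝ) else 0) - (if G.Adj u v then 1 else 0) := by
      intro u v
      simp [SimpleGraph.lapMatrix, SimpleGraph.degMatrix, Matrix.diagonal_apply]
    have hWuv : ∀ u v : V, W u v =
        if G.Adj u v then (Real.sqrt (G.degree u) * Real.sqrt (G.degree v))⁻¹ else 0 := by
      intro u v
      rw [hWdef]
      simp only [Matrix.of_apply]
      split_ifs with h
      · rw [Real.sqrt_mul (by positivity)]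
      · rfl
    have hℒuv : ∀ u v : V, ℒ u v =
        (if u = v then (1:ℝ) else 0)
          - (if G.Adj u v then (Real.sqrt (G.degree u) * Real.sqrt (G.degree v))⁻¹ else 0) := by
      intro u v
      rw [hℒdef, Matrix.sub_apply, hWuv, Matrix.one_apply]
    have hTLT : ℒ = T * G.lapMatrix ℝ * T := by
      ext u v
      rw [Matrix.mul_diagonal, Matrix.diagonal_mul, hLap, hℒuv]
      by_cases huv : u = v
      · subst huv
        simp only [if_pos rfl, if_neg (G.irrefl), sub_zero]
        have h : Real.sqrt (G.degree u) * Real.sqrt (G.degree u) = (G.degree u : ℝ) :=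
          Real.mul_self_sqrt (le_of_lt (hdR u))
        rw [← h]
        field_simp
        simp only [if_true]
        rw [Real.sq_sqrt (sq_nonneg _)]
        exact (div_self (pow_ne_zero 2 (hsd u))).symm
      · by_cases hadj : G.Adj u v
        · simp only [if_neg huv, if_pos hadj]
          rw [mul_inv]
          ring
        · simp [if_neg huv, if_neg hadj]
    have hℒpsd : ℒ.PosSemidef := by
      have h := (SimpleGraph.posSemidef_lapMatrix ℝ G).conjTranspose_mul_mul_same T
      have hTH : Tᴴ = T := by
        rw [hTdef, Matrix.diagonal_conjTranspose]
        congr 1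
      rw [hTH] at h
      rw [hTLT]
      exact h
    have hMpsd : M.PosSemidef := by
      refine Matrix.PosSemidef.of_dotProduct_mulVec_nonneg hM fun x => ?_
      have h := (SimpleGraph.posSemidef_lapMatrix ℝ G).dotProduct_mulVec_nonneg x
      rw [hMdef, Matrix.smul_mulVec, dotProduct_smul]
      exact smul_nonneg (inv_nonneg.mpr (le_of_lt hδpos)) h
    -- first comparison
    have hs10 : ∀ v : V, (0:ℝ) ≤ Real.sqrt ((G.degree v : ℝ) / δ) :=
      fun v => Real.sqrt_nonneg _
    have hs11 : ∀ v : V, Real.sqrt ((G.degree v : ℝ) / δ) ≤ 1 := by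
      intro v
      rw [Real.sqrt_le_one, div_le_one hδpos]
      exact hdle v
    have key1 := aux_main hℒpsd hs10 hs11 ht
    have hSLS : Matrix.diagonal (fun v => Real.sqrt ((G.degree v : ℝ) / δ)) * ℒ *
        Matrix.diagonal (fun v => Real.sqrt ((G.degree v : ℝ) / δ)) = M := by
      ext u v
      rw [Matrix.mul_diagonal, Matrix.diagonal_mul, hℒuv, hMdef, Matrix.smul_apply, hLap,
        smul_eq_mul]
      have hsq : ∀ w : V, Real.sqrt ((G.degree w : ℝ) / δ)
          = Real.sqrt (G.degree w) / Real.sqrt δ := by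
        intro w
        rw [Real.sqrt_div (by positivity)]
      by_cases huv : u = v
      · subst huv
        simp only [eq_self_iff_true, if_true, if_neg (G.irrefl), sub_zero, mul_one]
        have h := Real.mul_self_sqrt (div_nonneg (le_of_lt (hdR u)) (le_of_lt hδpos))
        rw [h]
        field_simp
      · by_cases hadj : G.Adj u v
        · simp only [if_neg huv, if_pos hadj, zero_sub, zero_sub]
          rw [hsq u, hsq v]
          have h1 := Real.mul_self_sqrt (le_of_lt hδpos)
          have h2 := hsd u
          have h3 := hsd v
          field_simp
          linear_combination h1
        · simp [if_neg huv, if_neg hadj]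
    rw [hSLS] at key1
    -- second comparison
    have hs20 : ∀ v : V, (0:ℝ) ≤ (Real.sqrt (G.degree v))⁻¹ := fun v => by positivity
    have hs21 : ∀ v : V, (Real.sqrt (G.degree v))⁻¹ ≤ 1 := by
      intro v
      have h1 : (1:ℝ) ≤ Real.sqrt (G.degree v) := by
        rw [show (1:ℝ) = Real.sqrt 1 by simp]
        apply Real.sqrt_le_sqrt
        exact_mod_cast hd v
      simpa using inv_le_one_of_one_le₀ h1
    have key2 := aux_main hMpsd hs20 hs21 ht
    have hTMT : Matrix.diagonal (fun v => (Real.sqrt (G.degree v))⁻¹) * M *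
        Matrix.diagonal (fun v => (Real.sqrt (G.degree v))⁻¹) = δ⁻¹ • ℒ := by
      rw [← hTdef, hMdef, Matrix.mul_smul, Matrix.smul_mul, hTLT]
    rw [hTMT] at key2
    -- conversions between eigenvalue sums and traces
    have hconv1 : (-t) • ℒ = t • W + (-t) • (1 : Matrix V V ℝ) := by
      rw [hℒdef]; module
    have hconv3 : (-t) • (δ⁻¹ • ℒ) = (t/δ) • W + (-(t/δ)) • (1 : Matrix V V ℝ) := by
      rw [hℒdef]
      match_scalars <;> field_simp
    have e1 : ∑ v : V, Real.exp (-t * (1 - hL.eigenvalues v))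
        = (NormedSpace.exp ((-t) • ℒ)).trace := by
      rw [hconv1, aux_trace_exp_smul_add_smul_one hL t (-t)]
      refine Finset.sum_congr rfl fun v _ => ?_
      congr 1
      ring
    have e2 : ∑ v : V, Real.exp (-t * hM.eigenvalues v)
        = (NormedSpace.exp ((-t) • M)).trace := (aux_trace_exp_smul hM (-t)).symm
    have e3 : ∑ v : V, Real.exp (-(t / δ) * (1 - hL.eigenvalues v))
        = (NormedSpace.exp ((-t) • (δ⁻¹ • ℒ))).trace := by
      rw [hconv3, aux_trace_exp_smul_add_smul_one hL (t/δ) (-(t/δ))]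
      refine Finset.sum_congr rfl fun v _ => ?_
      congr 1
      ring
    constructor
    · refine mul_le_mul_of_nonneg_left ?_ (by positivity)
      rw [e1, e2]
      exact key1
    · refine mul_le_mul_of_nonneg_left ?_ (by positivity)
      rw [e2, e3]
      exact key2
end

section
/- Let β_2^T be the second largest eigenvalue of the RRW transition matrix (regularisation degree δ) on any finite connected tree T with N vertices and maximum degree at most δ. Then β_2^T ≤ 1 − 4/(δN²). -/
open Finset Matrix
set_option linter.unusedSectionVars false
set_option maxHeartbeats 800000

variable {V : Type} [Fintype V] [DecidableEq V] (G : SimpleGraph V) [DecidableRel G.Adj]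

lemma dart_sum_eq (f : V → V → ℝ) :
    ∑ d : G.Dart, f d.fst d.snd = ∑ i : V, ∑ j : V, if G.Adj i j then f i j else 0 := by
  rw [← Finset.sum_product']
  rw [← Finset.sum_filter]
  apply Finset.sum_bij (fun (d : G.Dart) _ => d.toProd)
  · intro d _; simp [d.adj]
  · intro d _ e _ h; exact SimpleGraph.Dart.ext d e h
  · intro p hp; simp only [Finset.mem_filter] at hp
    exact ⟨⟨p, hp.2⟩, Finset.mem_univ _, rfl⟩
  · intro d _; rfl

lemma telescope {u v : V} (x : V → ℝ) (p : G.Walk u v) :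
    (p.darts.map (fun d => x d.fst - x d.snd)).sum = x u - x v := by
  induction p with
  | nil => simp
  | cons h q ih => simp [SimpleGraph.Walk.darts_cons, ih]

lemma lap_quad (x : V → ℝ) :
    x ⬝ᵥ (G.lapMatrix ℝ *ᵥ x) = (∑ d : G.Dart, (x d.fst - x d.snd)^2) / 2 := by
  rw [← Matrix.toLinearMap₂'_apply', SimpleGraph.lapMatrix_toLinearMap₂', ← dart_sum_eq]

lemma gap (hc : G.Connected) (x : V → ℝ) (hsum : ∑ i, x i = 0) :
    4 / (Fintype.card V : ℝ)^2 * (∑ i, x i ^ 2) ≤ x ⬝ᵥ (G.lapMatrix ℝ *ᵥ x) := by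
  have : Nonempty V := hc.nonempty
  have hNe : (Finset.univ : Finset V).Nonempty := Finset.univ_nonempty
  set N : ℝ := (Fintype.card V : ℝ) with hNdef
  have hN0 : 0 < N := by
    rw [hNdef]
    exact_mod_cast Fintype.card_pos (α := V)
  obtain ⟨u, -, hu⟩ := Finset.exists_max_image univ x hNe
  obtain ⟨v, -, hv⟩ := Finset.exists_min_image univ x hNe
  set M := x u with hM
  set m := x v with hm
  -- Part 1 : ∑ x² ≤ N * ((M-m)/2)²
  have e1 : ∑ i, (x i - (M+m)/2)^2 = (∑ i, x i^2) + N * ((M+m)/2)^2 := by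
    have h : ∀ i : V, (x i - (M+m)/2)^2 = x i^2 - (2*((M+m)/2))*x i + ((M+m)/2)^2 := by
      intro i; ring
    simp_rw [h]
    rw [Finset.sum_add_distrib, Finset.sum_sub_distrib, ← Finset.mul_sum, hsum, mul_zero,
      sub_zero, Finset.sum_const, Finset.card_univ, nsmul_eq_mul]
  have h1' : ∑ i, (x i - (M+m)/2)^2 ≤ N * ((M-m)/2)^2 := by
    calc ∑ i, (x i - (M+m)/2)^2 ≤ ∑ _i : V, ((M-m)/2)^2 :=
          Finset.sum_le_sum (fun i _ => sq_le_sq'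
            (by have := hv i (Finset.mem_univ i); simp only [hm] at this ⊢; linarith)
            (by have := hu i (Finset.mem_univ i); simp only [hM] at this ⊢; linarith))
      _ = N * ((M-m)/2)^2 := by rw [Finset.sum_const, Finset.card_univ, nsmul_eq_mul]
  have h1 : ∑ i, x i ^ 2 ≤ N * ((M-m)/2)^2 := by nlinarith [sq_nonneg ((M+m)/2)]
  -- Part 2 : (M - m)² ≤ N * Q
  set Q := x ⬝ᵥ (G.lapMatrix ℝ *ᵥ x) with hQ
  obtain ⟨p0⟩ : G.Reachable u v := hc u v
  set q : G.Walk u v := (p0.toPath : G.Walk u v) with hq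
  have hp : q.IsPath := p0.toPath.2
  have hnd : q.darts.Nodup := SimpleGraph.Walk.darts_nodup_of_support_nodup hp.support_nodup
  set S : Finset G.Dart := q.darts.toFinset with hS
  have hSsum : ∑ d ∈ S, (x d.fst - x d.snd) = M - m := by
    rw [hS, List.sum_toFinset _ hnd, telescope]
  have hScard : (#S : ℝ) ≤ N := by
    have h2 := hp.length_lt
    have h3 : #S ≤ Fintype.card V := by
      rw [hS, List.toFinset_card_of_nodup hnd, SimpleGraph.Walk.length_darts]
      omega
    rw [hNdef]
    exact_mod_cast h3
  have hCS : (M - m)^2 ≤ #S * ∑ d ∈ S, (x d.fst - x d.snd)^2 := by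
    rw [← hSsum]; exact sq_sum_le_card_mul_sum_sq
  -- double counting via symm darts
  have hnd' : (q.darts.map SimpleGraph.Dart.symm).Nodup :=
    hnd.map (SimpleGraph.Dart.symm_involutive.injective)
  set S' : Finset G.Dart := (q.darts.map SimpleGraph.Dart.symm).toFinset with hS'
  have hdisj : Disjoint S S' := by
    rw [Finset.disjoint_left]
    intro d hdS hdS'
    rw [hS, List.mem_toFinset] at hdS
    rw [hS', List.mem_toFinset] at hdS'
    obtain ⟨e, he, rfl⟩ := List.mem_map.mp hdS'
    have hinj := List.inj_on_of_nodup_map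
      (show (q.darts.map SimpleGraph.Dart.edge).Nodup from hp.edges_nodup)
    have : e = e.symm := hinj he hdS (SimpleGraph.Dart.edge_symm e).symm
    exact SimpleGraph.Dart.symm_ne e this.symm
  have hS'sum : ∑ d ∈ S', (x d.fst - x d.snd)^2 = ∑ d ∈ S, (x d.fst - x d.snd)^2 := by
    rw [hS', List.sum_toFinset _ hnd', hS, List.sum_toFinset _ hnd, List.map_map]
    congr 1
    apply List.map_congr_left
    intro d _
    show (x d.symm.fst - x d.symm.snd)^2 = (x d.fst - x d.snd)^2
    have h1 : d.symm.fst = d.snd := rfl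
    have h2 : d.symm.snd = d.fst := rfl
    rw [h1, h2, ← neg_sub, neg_sq]
  have hSQ : ∑ d ∈ S, (x d.fst - x d.snd)^2 ≤ Q := by
    have hle : ∑ d ∈ S ∪ S', (x d.fst - x d.snd)^2 ≤ ∑ d : G.Dart, (x d.fst - x d.snd)^2 :=
      Finset.sum_le_sum_of_subset_of_nonneg (Finset.subset_univ _) (fun i _ _ => sq_nonneg _)
    rw [Finset.sum_union hdisj, hS'sum] at hle
    rw [hQ, lap_quad]
    linarith
  have hSnn : 0 ≤ ∑ d ∈ S, (x d.fst - x d.snd)^2 := Finset.sum_nonneg (fun d _ => sq_nonneg _)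
  have h2 : (M - m)^2 ≤ N * Q := by
    calc (M - m)^2 ≤ #S * ∑ d ∈ S, (x d.fst - x d.snd)^2 := hCS
      _ ≤ N * ∑ d ∈ S, (x d.fst - x d.snd)^2 := mul_le_mul_of_nonneg_right hScard hSnn
      _ ≤ N * Q := mul_le_mul_of_nonneg_left hSQ hN0.le
  rw [div_mul_eq_mul_div, div_le_iff₀ (by positivity)]
  nlinarith [mul_le_mul_of_nonneg_left h2 hN0.le]

/-- **Second eigenvalue of the RRW on a finite tree.** For any finite connected tree
on `N` vertices with maximum degree at most `δ`, the second largest eigenvalue of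
the RRW transition matrix `A = I - (1/δ)L` satisfies `β₂ ≤ 1 - 4/(δN²)`. -/
theorem rrw_tree_second_eigenvalue {V : Type} [Fintype V] [DecidableEq V]
    (G : SimpleGraph V) [DecidableRel G.Adj]
    (hT : G.IsTree) (hN : 2 ≤ Fintype.card V)
    (δ : ℕ) (hdeg : G.maxDegree ≤ δ)
    (hA : ((1 : Matrix V V ℝ) - ((δ : ℝ))⁻¹ • G.lapMatrix ℝ).IsHermitian)
    (β : Fin (Fintype.card V) → ℝ) (hβ : Antitone β)
    (hβe : ∃ σ : Fin (Fintype.card V) ≃ V, β = hA.eigenvalues ∘ σ) :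
    β ⟨1, by omega⟩ ≤ 1 - 4 / ((δ : ℝ) * (Fintype.card V : ℝ) ^ 2) := by
  obtain ⟨σ, hσ⟩ := hβe
  set Amat : Matrix V V ℝ := (1 : Matrix V V ℝ) - ((δ : ℝ))⁻¹ • G.lapMatrix ℝ with hAmat
  set μ : V → ℝ := hA.eigenvalues with hμ
  set B := hA.eigenvectorBasis with hB
  set N : ℝ := (Fintype.card V : ℝ) with hNdef
  -- δ is positive
  have hδpos : 0 < δ := by
    obtain ⟨u, v, huv⟩ : ∃ u v : V, G.Adj u v := by
      obtain ⟨u, v, huv⟩ := Fintype.exists_pair_of_one_lt_card (by omega : 1 < Fintype.card V)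
      obtain ⟨p⟩ := hT.isConnected u v
      cases p with
      | nil => exact absurd rfl huv
      | cons h q => exact ⟨_, _, h⟩
    have h1 : 0 < G.degree u := G.degree_pos_iff_exists_adj u |>.mpr ⟨v, huv⟩
    have h2 := G.degree_le_maxDegree u
    omega
  -- orthonormality of eigenvectors as sums
  have horth : ∀ i j : V, ∑ k, (B i) k * (B j) k = if i = j then (1:ℝ) else 0 := by
    intro i j
    have h := hA.eigenvectorBasis.orthonormal
    rw [orthonormal_iff_ite] at h
    have h2 := h i j
    simp only [PiLp.inner_apply, RCLike.inner_apply, conj_trivial] at h2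
    rw [← hB] at h2
    rw [← h2]; exact Finset.sum_congr rfl (fun k _ => mul_comm _ _)
  -- the two top indices
  have h01 : (⟨0, by omega⟩ : Fin (Fintype.card V)) ≤ ⟨1, by omega⟩ := by
    rw [Fin.mk_le_mk]; omega
  set i0 : V := σ ⟨0, by omega⟩ with hi0
  set i1 : V := σ ⟨1, by omega⟩ with hi1
  have hne : i0 ≠ i1 := by
    intro h
    have := congrArg Fin.val (σ.injective h)
    simp at this
  have hmu10 : μ i1 ≤ μ i0 := by
    have := hβ h01
    rw [hσ] at this
    exact this
  -- choose a combination orthogonal to constants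
  set s0 : ℝ := ∑ k, (B i0) k with hs0
  set s1 : ℝ := ∑ k, (B i1) k with hs1
  obtain ⟨a, b, hab0, htpos⟩ : ∃ a b : ℝ, a * s0 + b * s1 = 0 ∧ 0 < a^2 + b^2 := by
    by_cases h : s1 = 0
    · exact ⟨0, 1, by simp [h], by norm_num⟩
    · refine ⟨s1, -s0, by ring, ?_⟩
      have h1 : 0 < s1^2 := lt_of_le_of_ne (sq_nonneg s1) (Ne.symm (pow_ne_zero 2 h))
      nlinarith [sq_nonneg s0]
  set w : V → ℝ := fun k => a * (B i0) k + b * (B i1) k with hw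
  have hwsum : ∑ k, w k = 0 := by
    simp only [hw]
    rw [Finset.sum_add_distrib, ← Finset.mul_sum, ← Finset.mul_sum, ← hs0, ← hs1]
    exact hab0
  set t : ℝ := a^2 + b^2 with ht
  have hw2 : ∑ k, w k ^ 2 = t := by
    have expand : ∀ k, w k^2 = a^2*((B i0) k * (B i0) k) + (2*a*b)*((B i0) k * (B i1) k)
        + b^2*((B i1) k * (B i1) k) := by
      intro k; simp only [hw]; ring
    calc ∑ k, w k ^2 = ∑ k, (a^2*((B i0) k * (B i0) k) + (2*a*b)*((B i0) k * (B i1) k)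
        + b^2*((B i1) k * (B i1) k)) := Finset.sum_congr rfl (fun k _ => expand k)
      _ = a^2*(∑ k, (B i0) k * (B i0) k) + (2*a*b)*(∑ k, (B i0) k * (B i1) k)
        + b^2*(∑ k, (B i1) k * (B i1) k) := by
          rw [Finset.sum_add_distrib, Finset.sum_add_distrib, ← Finset.mul_sum,
            ← Finset.mul_sum, ← Finset.mul_sum]
      _ = t := by rw [horth i0 i0, horth i0 i1, horth i1 i1]; simp [hne, ht]
  -- action of A on w
  have hw_eq : w = a • ⇑(B i0) + b • ⇑(B i1) := by
    funext k; simp [hw]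
  have hAw : Amat *ᵥ w = a • (μ i0 • ⇑(B i0)) + b • (μ i1 • ⇑(B i1)) := by
    rw [hw_eq, Matrix.mulVec_add, Matrix.mulVec_smul, Matrix.mulVec_smul,
      hA.mulVec_eigenvectorBasis, hA.mulVec_eigenvectorBasis]
  have hAw' : ∀ k, (Amat *ᵥ w) k = a * μ i0 * (B i0) k + b * μ i1 * (B i1) k := by
    intro k
    rw [hAw]
    simp [mul_assoc]
  have hquadA : w ⬝ᵥ (Amat *ᵥ w) = a^2 * μ i0 + b^2 * μ i1 := by
    show ∑ k, w k * (Amat *ᵥ w) k = _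
    have expand : ∀ k, w k * (Amat *ᵥ w) k = (a^2*μ i0)*((B i0) k * (B i0) k)
        + (a*b*(μ i0 + μ i1))*((B i0) k * (B i1) k)
        + (b^2*μ i1)*((B i1) k * (B i1) k) := by
      intro k; rw [hAw' k]; simp only [hw]; ring
    calc ∑ k, w k * (Amat *ᵥ w) k
        = ∑ k, ((a^2*μ i0)*((B i0) k * (B i0) k)
          + (a*b*(μ i0 + μ i1))*((B i0) k * (B i1) k)
          + (b^2*μ i1)*((B i1) k * (B i1) k)) := Finset.sum_congr rfl (fun k _ => expand k)
      _ = (a^2*μ i0)*(∑ k, (B i0) k * (B i0) k) + (a*b*(μ i0 + μ i1))*(∑ k, (B i0) k * (B i1) k)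
          + (b^2*μ i1)*(∑ k, (B i1) k * (B i1) k) := by
          rw [Finset.sum_add_distrib, Finset.sum_add_distrib, ← Finset.mul_sum,
            ← Finset.mul_sum, ← Finset.mul_sum]
      _ = a^2 * μ i0 + b^2 * μ i1 := by
          rw [horth i0 i0, horth i0 i1, horth i1 i1]; simp [hne]
  -- split A = I - δ⁻¹ L
  have hww : w ⬝ᵥ w = t := by
    show ∑ k, w k * w k = t
    rw [← hw2]
    exact Finset.sum_congr rfl (fun k _ => (sq (w k)).symm ▸ by ring)
  have hsplit : w ⬝ᵥ (Amat *ᵥ w) = t - (δ:ℝ)⁻¹ * (w ⬝ᵥ (G.lapMatrix ℝ *ᵥ w)) := by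
    rw [hAmat, Matrix.sub_mulVec, dotProduct_sub, Matrix.one_mulVec, hww,
      Matrix.smul_mulVec, dotProduct_smul, smul_eq_mul]
  -- spectral gap
  have hQge : 4 / N^2 * t ≤ w ⬝ᵥ (G.lapMatrix ℝ *ᵥ w) := by
    have := gap G hT.isConnected w hwsum
    rwa [hw2, ← hNdef] at this
  set Q : ℝ := w ⬝ᵥ (G.lapMatrix ℝ *ᵥ w) with hQdef
  have e_total : a^2 * μ i0 + b^2 * μ i1 = t - (δ:ℝ)⁻¹ * Q := by
    rw [← hquadA, hsplit]
  -- assemble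
  have hδR : (0:ℝ) < (δ:ℝ) := by exact_mod_cast hδpos
  have hNpos : (0:ℝ) < N := by
    rw [hNdef]; exact_mod_cast (by omega : 0 < Fintype.card V)
  clear_value t Q N
  have step1 : t * μ i1 ≤ a^2*μ i0 + b^2*μ i1 := by
    rw [ht]
    nlinarith [ mul_nonneg (sq_nonneg a) (sub_nonneg.mpr hmu10)]
  have step2 : (δ:ℝ)⁻¹ * (4/N^2 * t) ≤ (δ:ℝ)⁻¹ * Q :=
    mul_le_mul_of_nonneg_left hQge (by positivity)
  have hc4 : (δ:ℝ)⁻¹ * (4/N^2 * t) = 4/((δ:ℝ)*N^2) * t := by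
    field_simp
  have hrhs : t * (1 - 4/((δ:ℝ)*N^2)) = t - 4/((δ:ℝ)*N^2)*t := by ring
  have key : t * μ i1 ≤ t * (1 - 4/((δ:ℝ)*N^2)) := by
    rw [hrhs]
    linarith [step1, step2, e_total, hc4]
  have hfinal : μ i1 ≤ 1 - 4/((δ:ℝ)*N^2) := le_of_mul_le_mul_left
    (by rw [mul_comm t] at key; rw [mul_comm]; exact key) htpos
  rw [hσ]
  exact hfinal
end
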